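/- Posterior null-probability comparison in the exchangeable Gaussian model (core of the optimal-ranking result under exchangeability): let m ≥ 2, let A be an m×m real matrix with constant diagonal A_{ii} = a and constant off-diagonal entries A_{ij} = b for i ≠ j, with b < a. Let π ∈ (0,1), μ < 0, and z ∈ ℝ^m with z_1 > z_2. For θ ∈ {0,1}^m define the unnormalized posterior weight g(θ) = π^{Σ_i θ_i} (1−π)^{m−Σ_i θ_i} · exp{(−1/2)(z−μθ)ᵀA(z−μθ)}. Then Σ over θ ∈ {0,1}^m with θ_1 = 0 of g(θ) is strictly greater than Σ over θ ∈ {0,1}^m with θ_2 = 0 of g(θ). Consequently, in the exchangeable Gaussian model the posterior null probability of hypothesis 1 strictly exceeds that of hypothesis 2 whenever z_1 > z_2 and μ < 0. -/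

import Mathlib

/-!
Swapping the first two coordinates of `θ` maps `{θ₂ = 0}` bijectively onto `{θ₁ = 0}` and
leaves both the prior and `∑ᵢ (z − μθ)ᵢ` unchanged. For a precision matrix with constant
diagonal `a` and off-diagonal `b` the quadratic form is `(a − b)‖w‖² + b (∑ᵢ wᵢ)²`, so only
`‖z − μθ‖²` moves: on `θ` with `θ₁ = 0` the swap multiplies the weight by
`exp((a − b) μ (z₁ − z₂) θ₂)`, which is `1` if `θ₂ = 0` and `< 1` if `θ₂ = 1`.
-/

open Finset

/-- The unnormalized posterior weight `g(θ)` of a configuration `θ ∈ {0,1}^m`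
(encoded as `θ : Fin m → Bool`): an i.i.d. Bernoulli(π) prior times the unnormalized
Gaussian likelihood `exp{(−1/2)(z−μθ)ᵀA(z−μθ)}` with precision matrix `A`. -/
noncomputable def postWeight (m : ℕ) (A : Matrix (Fin m) (Fin m) ℝ) (π μ : ℝ)
    (z : Fin m → ℝ) (θ : Fin m → Bool) : ℝ :=
  π ^ (Finset.univ.filter fun i => θ i = true).card *
    (1 - π) ^ (m - (Finset.univ.filter fun i => θ i = true).card) *
    Real.exp ((-(1 : ℝ) / 2) *
      dotProduct (z - μ • fun i => if θ i then (1 : ℝ) else 0)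
        (A.mulVec (z - μ • fun i => if θ i then (1 : ℝ) else 0)))

open Matrix

theorem dotProduct_mulVec_of_diag_of_offDiag {ι : Type*} [Fintype ι] {A : Matrix ι ι ℝ}
    {a b : ℝ} (hdiag : ∀ i, A i i = a) (hoff : ∀ i j, i ≠ j → A i j = b) (w : ι → ℝ) :
    w ⬝ᵥ (A *ᵥ w) = (a - b) * ∑ i, w i ^ 2 + b * (∑ i, w i) ^ 2 := by
  classical
  have hA : A = (a - b) • (1 : Matrix ι ι ℝ) + of fun _ _ => b := by
    ext i j
    by_cases h : i = j
    · subst h; simp [hdiag]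
    · simp [hoff i j h, one_apply_ne h]
  have hconst : (of fun _ _ => b : Matrix ι ι ℝ) *ᵥ w = (b * ∑ i, w i) • 1 := by
    ext; simp [mulVec, dotProduct, Finset.mul_sum]
  rw [hA, add_mulVec, smul_mulVec, one_mulVec, hconst, dotProduct_add, dotProduct_smul,
    dotProduct_smul, dotProduct_one, smul_eq_mul, smul_eq_mul, dotProduct]
  simp only [sq]
  ring

theorem card_filter_comp_perm {ι : Type*} [Fintype ι] (σ : Equiv.Perm ι) (p : ι → Prop)
    [DecidablePred p] : #{i | p (σ i)} = #{i | p i} := by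
  simp only [card_filter]
  exact Equiv.sum_comp σ fun i => if p i then 1 else 0

theorem sum_sub_mul_comp_swap_sq {ι : Type*} [Fintype ι] [DecidableEq ι] (z x : ι → ℝ) (c : ℝ)
    {i j : ι} (hij : i ≠ j) :
    ∑ k, (z k - c * x (Equiv.swap i j k)) ^ 2
      = ∑ k, (z k - c * x k) ^ 2 + 2 * c * (z i - z j) * (x i - x j) := by
  rw [← sub_eq_iff_eq_add', ← sum_sub_distrib,
    Fintype.sum_eq_add i j hij fun k hk => by
      rw [Equiv.swap_apply_of_ne_of_ne hk.1 hk.2, sub_self]]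
  simp only [Equiv.swap_apply_left, Equiv.swap_apply_right]
  ring

theorem postWeight_comp_swap {m : ℕ} {A : Matrix (Fin m) (Fin m) ℝ} {a b : ℝ}
    (hdiag : ∀ i, A i i = a) (hoff : ∀ i j, i ≠ j → A i j = b) (π μ : ℝ) (z : Fin m → ℝ)
    (θ : Fin m → Bool) {i j : Fin m} (hij : i ≠ j) :
    postWeight m A π μ z (θ ∘ Equiv.swap i j)
      = Real.exp (-((a - b) * μ * (z i - z j) *
          ((if θ i then 1 else 0) - (if θ j then 1 else 0)))) * postWeight m A π μ z θ := by
  have hsum : ∑ k, (z k - μ * if θ (Equiv.swap i j k) then 1 else 0)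
      = ∑ k, (z k - μ * if θ k then 1 else 0) := by
    simp only [sum_sub_distrib, ← mul_sum]
    rw [Equiv.sum_comp (Equiv.swap i j) fun k => if θ k then (1 : ℝ) else 0]
  unfold postWeight
  simp only [Function.comp_apply, card_filter_comp_perm (Equiv.swap i j) fun k => θ k = true,
    dotProduct_mulVec_of_diag_of_offDiag hdiag hoff, Pi.sub_apply, Pi.smul_apply,
    smul_eq_mul]
  rw [sum_sub_mul_comp_swap_sq z (fun k => if θ k then 1 else 0) μ hij, hsum, mul_left_comm,
    ← Real.exp_add]
  congr 2
  ring

theorem postWeight_pos (m : ℕ) (A : Matrix (Fin m) (Fin m) ℝ) {π : ℝ}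
    (hπ : π ∈ Set.Ioo (0 : ℝ) 1) (μ : ℝ) (z : Fin m → ℝ) (θ : Fin m → Bool) :
    0 < postWeight m A π μ z θ := by
  have hπ0 := hπ.1
  have hπ1 := sub_pos.2 hπ.2
  unfold postWeight
  positivity

theorem sum_filter_apply_eq_sum_filter_comp_swap {ι β M : Type*} [Fintype ι] [DecidableEq ι]
    [Fintype β] [DecidableEq β] [AddCommMonoid M] (f : (ι → β) → M) (i j : ι) (c : β) :
    ∑ θ ∈ univ.filter (fun θ : ι → β => θ j = c), f θ
      = ∑ θ ∈ univ.filter (fun θ : ι → β => θ i = c), f (θ ∘ Equiv.swap i j) := by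
  apply sum_nbij' (· ∘ Equiv.swap i j) (· ∘ Equiv.swap i j) <;> intro θ _ <;>
    simp_all [Function.comp_def, Equiv.swap_apply_self]

/-- **Posterior null-probability comparison in the exchangeable Gaussian model** (core of
the optimal-ranking result under exchangeability): with `b < a`, `π ∈ (0,1)`, `μ < 0`
and `z₁ > z₂`, the total unnormalized posterior weight of `{θ : θ₁ = 0}` strictly
exceeds that of `{θ : θ₂ = 0}`; i.e., the posterior null probability of hypothesis 1
strictly exceeds that of hypothesis 2. -/
theorem posterior_null_comparison (m : ℕ) (hm : 2 ≤ m)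
    (A : Matrix (Fin m) (Fin m) ℝ) (a b : ℝ)
    (hdiag : ∀ i, A i i = a) (hoff : ∀ i j, i ≠ j → A i j = b) (hba : b < a)
    (π : ℝ) (hπ : π ∈ Set.Ioo (0 : ℝ) 1) (μ : ℝ) (hμ : μ < 0)
    (z : Fin m → ℝ) (hz : z ⟨0, by omega⟩ > z ⟨1, by omega⟩) :
    ∑ θ ∈ Finset.univ.filter (fun θ : Fin m → Bool => θ ⟨0, by omega⟩ = false),
        postWeight m A π μ z θ
      > ∑ θ ∈ Finset.univ.filter (fun θ : Fin m → Bool => θ ⟨1, by omega⟩ = false),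
          postWeight m A π μ z θ := by
  set i : Fin m := ⟨0, by omega⟩
  set j : Fin m := ⟨1, by omega⟩
  have hij : i ≠ j := by simp [i, j, Fin.ext_iff]
  have hrate : (a - b) * μ * (z i - z j) < 0 :=
    mul_neg_of_neg_of_pos (mul_neg_of_pos_of_neg (sub_pos.2 hba) hμ) (sub_pos.2 hz)
  have hswap : ∀ θ : Fin m → Bool, θ i = false →
      postWeight m A π μ z (θ ∘ Equiv.swap i j)
        = Real.exp ((a - b) * μ * (z i - z j) * (if θ j then 1 else 0)) *
            postWeight m A π μ z θ := by
    intro θ hθ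
    rw [postWeight_comp_swap hdiag hoff π μ z θ hij, hθ]
    congr 2
    simp
  rw [gt_iff_lt, sum_filter_apply_eq_sum_filter_comp_swap _ i j]
  refine sum_lt_sum (fun θ hθ => ?_) ⟨fun k => decide (k = j), by simp [hij], ?_⟩
  · rw [hswap θ (mem_filter.1 hθ).2]
    refine mul_le_of_le_one_left (postWeight_pos m A hπ μ z θ).le (Real.exp_le_one_iff.2 ?_)
    split_ifs
    · simpa using hrate.le
    · simp
  · rw [hswap _ (by simp [hij])]
    exact mul_lt_of_lt_one_left (postWeight_pos m A hπ μ z _)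
      (Real.exp_lt_one_iff.2 (by simpa using hrate))
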